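/- arXiv:1312.0040 — 3 statements merged into one kernel-verified Lean document; each statement's English description precedes it below -/
import Mathlib

section
/- With τ_p^{(1)}, τ_p^{(2)}, τ_p^{(3)} defined as above (where the infinite series in τ_p^{(1)} is replaced by its closed form (1/2)·(1-(1-p)^2)^2·(1-p)^5/(1-(1-p)^4)), for all p ∈ (0,1) sufficiently close to 0 we have τ_p^{(2)} > τ_p^{(1)} and τ_p^{(2)} > τ_p^{(3)}. -/
noncomputable def tau1 (p : ℝ) : ℝ :=
  (1/2) * (1 - p + (1-p) * (1 - (1-p)^2)^2)
    + (1/2) * (1 - (1-p)^2)^2 * (1-p)^5 / (1 - (1-p)^4)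

noncomputable def tau2 (p : ℝ) : ℝ :=
  (2/3) * (1-p) + (1/3) * p * (1-p) * (1 - (1-p)^2)

noncomputable def tau3 (p : ℝ) : ℝ :=
  (1/2) * (1-p) + (1/4) * (1-p) * (1 - (1-p)^2) * (1 + p + (1-p)^3)

theorem tau2_best_near_zero :
    ∃ ε : ℝ, 0 < ε ∧ ε < 1 ∧
      ∀ p : ℝ, 0 < p → p < ε → tau2 p > tau1 p ∧ tau2 p > tau3 p := by
  refine ⟨1/10, by norm_num, by norm_num, fun p hp hp' => ?_⟩
  have hC : (0:ℝ) < 1 - (1-p)^4 := by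
    have h4 : (1-p)^4 < 1 := by
      apply pow_lt_one₀ (by linarith) (by linarith) (by norm_num)
    linarith
  constructor
  · unfold tau1 tau2
    have hB : (1/2) * (1 - (1-p)^2)^2 * (1-p)^5 / (1 - (1-p)^4)
        < (2/3) * (1-p) + (1/3) * p * (1-p) * (1 - (1-p)^2)
          - (1/2) * (1 - p + (1-p) * (1 - (1-p)^2)^2) := by
      rw [div_lt_iff₀ hC]
      nlinarith [sq_nonneg p, sq_nonneg (1-p), pow_pos hp 2, pow_pos hp 3, pow_pos hp 4,
        mul_pos hp hp, sq_nonneg (p*(1-p)), pow_le_pow_left₀ hp.le hp'.le 2,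
        pow_le_pow_left₀ hp.le hp'.le 3]
    linarith
  · unfold tau2 tau3
    nlinarith [sq_nonneg p, sq_nonneg (1-p), sq_nonneg (p*(1-p)),
      pow_le_pow_left₀ hp.le hp'.le 2, pow_le_pow_left₀ hp.le hp'.le 3, mul_pos hp hp]
end

section
/- With τ_p^{(1)}, τ_p^{(2)}, τ_p^{(3)} defined as above, for all p ∈ (0,1) sufficiently close to 1 we have τ_p^{(1)} > τ_p^{(2)} and τ_p^{(1)} > τ_p^{(3)}. -/
set_option maxHeartbeats 1600000 in
theorem tau1_best_near_one :
    ∃ δ : ℝ, 0 < δ ∧ δ < 1 ∧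
      ∀ p : ℝ, δ < p → p < 1 → tau1 p > tau2 p ∧ tau1 p > tau3 p := by
  refine ⟨9/10, by norm_num, by norm_num, fun p hp hp1 => ?_⟩
  set q : ℝ := 1 - p with hq
  clear_value q
  have hq0 : 0 < q := by simp [hq]; linarith
  have hq1 : q < 1/10 := by simp [hq]; linarith
  have hq1' : q < 1 := by linarith
  have hD : 0 < 1 - q^4 := by
    have := pow_lt_one₀ (le_of_lt hq0) hq1' (by norm_num : (4:ℕ) ≠ 0)
    linarith
  have hDne : (1 - q^4) ≠ 0 := ne_of_gt hD
  have e1 : tau1 p = ((1/2) * (q + q * (1 - q^2)^2) * (1 - q^4)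
      + (1/2) * (1 - q^2)^2 * q^5) / (1 - q^4) := by
    unfold tau1
    rw [← hq]
    field_simp
  have e2 : tau2 p = (2/3) * q + (1/3) * (1-q) * q * (1 - q^2) := by
    have hp' : p = 1 - q := by linarith
    unfold tau2; rw [hp']; ring
  have e3 : tau3 p = (1/2) * q + (1/4) * q * (1 - q^2) * (1 + (1-q) + q^3) := by
    have hp' : p = 1 - q := by linarith
    unfold tau3; rw [hp']; ring
  constructor
  · rw [gt_iff_lt, ← sub_pos, e1, e2]
    have key : ((1/2) * (q + q * (1 - q^2)^2) * (1 - q^4)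
        + (1/2) * (1 - q^2)^2 * q^5) / (1 - q^4)
        - ((2/3) * q + (1/3) * (1-q) * q * (1 - q^2))
        = (q^2 * (1/3 - (2/3)*q - (1/3)*q^2 + q^3 - (1/3)*q^4 - (1/3)*q^5 + (1/3)*q^6))
          / (1 - q^4) := by
      field_simp
      ring
    rw [key]
    apply div_pos _ hD
    have h2 : 0 < q^2 := by positivity
    have hpow : ∀ n : ℕ, q^n < (1/10:ℝ)^n ∨ n = 0 := fun n => by
      rcases Nat.eq_zero_or_pos n with h | h
      · exact Or.inr h
      · exact Or.inl (pow_lt_pow_left₀ hq1 hq0.le (Nat.pos_iff_ne_zero.mp h))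
    have b2 : q^2 < 1/100 := by
      rcases hpow 2 with h | h; · norm_num at h; linarith
      · simp at h
    have b4 : q^4 < 1/10000 := by
      rcases hpow 4 with h | h; · norm_num at h; linarith
      · simp at h
    have b5 : q^5 < 1/100000 := by
      rcases hpow 5 with h | h; · norm_num at h; linarith
      · simp at h
    have b8 : q^8 < 1/100000000 := by
      rcases hpow 8 with h | h; · norm_num at h; linarith
      · simp at h
    have hinner : 0 < 1/3 - 2/3*q - 1/3*q^2 + q^3 - 1/3*q^4 - 1/3*q^5 + 1/3*q^6 := by
      linarith [pow_pos hq0 3, pow_pos hq0 6]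
    nlinarith [mul_pos h2 hinner]
  · rw [gt_iff_lt, ← sub_pos, e1, e3]
    have key : ((1/2) * (q + q * (1 - q^2)^2) * (1 - q^4)
        + (1/2) * (1 - q^2)^2 * q^5) / (1 - q^4)
        - ((1/2) * q + (1/4) * q * (1 - q^2) * (1 + (1-q) + q^3))
        = (q^2 * (1/4 - (1/2)*q - (1/2)*q^2 + q^3 - (1/2)*q^5 + (1/2)*q^6 - (1/4)*q^8))
          / (1 - q^4) := by
      rw [eq_div_iff hDne, sub_mul, div_mul_cancel₀ _ hDne]
      ring
    rw [key]
    apply div_pos _ hD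
    have h2 : 0 < q^2 := by positivity
    have hpow : ∀ n : ℕ, q^n < (1/10:ℝ)^n ∨ n = 0 := fun n => by
      rcases Nat.eq_zero_or_pos n with h | h
      · exact Or.inr h
      · exact Or.inl (pow_lt_pow_left₀ hq1 hq0.le (Nat.pos_iff_ne_zero.mp h))
    have b2 : q^2 < 1/100 := by
      rcases hpow 2 with h | h; · norm_num at h; linarith
      · simp at h
    have b5 : q^5 < 1/100000 := by
      rcases hpow 5 with h | h; · norm_num at h; linarith
      · simp at h
    have b8 : q^8 < 1/100000000 := by
      rcases hpow 8 with h | h; · norm_num at h; linarith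
      · simp at h
    have hinner : 0 < 1/4 - 1/2*q - 1/2*q^2 + q^3 - 1/2*q^5 + 1/2*q^6 - 1/4*q^8 := by
      linarith [pow_pos hq0 3, pow_pos hq0 6]
    nlinarith [mul_pos h2 hinner]
end

section
/- Let T_1 = {1}, |T_i| = 1, T_i ⊆ {i-1,i} for all i ∈ [K], and suppose x = min{j : N_j = 0} exists with x ≥ 2. Then ∑_{j=1}^{x-1} N_j = x, and there is exactly one index y ∈ [x-1] with N_y = 2 while N_j = 1 for all j ∈ [x-1] \ {y}; moreover T_i = {i} for i ∈ [y] and T_i = {i-1} for i ∈ {y+1,…,x}. -/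
theorem first_empty_transmitter_structure (K : ℕ) (hK : 1 ≤ K)
    (T : ℕ → ℕ)
    (hT1 : T 1 = 1) (hT : ∀ i, 2 ≤ i → i ≤ K → T i = i - 1 ∨ T i = i)
    (N : ℕ → ℕ)
    (hN : ∀ j, N j = ((Finset.Icc 1 K).filter (fun i => T i = j)).card)
    (x : ℕ) (hx2 : 2 ≤ x) (hxK : x ≤ K)
    (hx0 : N x = 0) (hxmin : ∀ j, 1 ≤ j → j < x → N j ≠ 0) :
    (∑ j ∈ Finset.Icc 1 (x-1), N j = x) ∧
    ∃ y, 1 ≤ y ∧ y ≤ x - 1 ∧ N y = 2 ∧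
      (∀ j, 1 ≤ j → j ≤ x - 1 → j ≠ y → N j = 1) ∧
      (∀ i, 1 ≤ i → i ≤ y → T i = i) ∧
      (∀ i, y + 1 ≤ i → i ≤ x → T i = i - 1) := by
  -- basic: only i = j or i = j+1 can transmit to j
  have hcases : ∀ j i, 1 ≤ i → i ≤ K → T i = j → i = j ∨ i = j + 1 := by
    intro j i hi1 hiK hTi
    rcases eq_or_lt_of_le hi1 with h1 | h2
    · left; rw [← h1] at hTi ⊢; omega
    · rcases hT i h2 hiK with h | h <;> omega
  -- N x = 0 means nobody transmits to x
  have hnox : ∀ i, 1 ≤ i → i ≤ K → T i ≠ x := by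
    intro i hi1 hiK hTi
    have hmem : i ∈ (Finset.Icc 1 K).filter (fun i => T i = x) := by
      simp [Finset.mem_filter, Finset.mem_Icc, hi1, hiK, hTi]
    have := hN x
    rw [hx0] at this
    have hempty : ((Finset.Icc 1 K).filter (fun i => T i = x)) = ∅ :=
      Finset.card_eq_zero.mp this.symm
    rw [hempty] at hmem
    exact absurd hmem (Finset.notMem_empty i)
  have hTx : T x = x - 1 := by
    rcases hT x hx2 hxK with h | h
    · exact h
    · exact absurd h (hnox x (by omega) hxK)
  -- define y
  set y := Nat.findGreatest (fun i => T i = i) x with hy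
  have hy1 : 1 ≤ y := Nat.le_findGreatest (by omega) hT1
  have hyx : y ≤ x := Nat.findGreatest_le x
  have hTy : T y = y := Nat.findGreatest_spec (P := fun i => T i = i) (by omega : 1 ≤ x) hT1
  have hyne : y ≠ x := by intro h; rw [h] at hTy; omega
  have hylt : y ≤ x - 1 := by omega
  -- above y, T i = i - 1
  have habove : ∀ i, y + 1 ≤ i → i ≤ x → T i = i - 1 := by
    intro i hi1 hi2
    have hne : ¬ T i = i :=
      Nat.findGreatest_is_greatest (P := fun n => T n = n) (by rw [← hy]; omega) hi2
    rcases hT i (by omega) (by omega) with h | h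
    · exact h
    · exact absurd h hne
  -- below (and up to) y, T i = i
  have hbelow : ∀ i, 1 ≤ i → i ≤ y → T i = i := by
    set z := Nat.findGreatest (fun i => ¬ T i = i) y with hz
    have hzgood : ∀ i, z < i → i ≤ y → T i = i := by
      intro i hzi hiy
      have := Nat.findGreatest_is_greatest (P := fun i => ¬ T i = i)
        (show Nat.findGreatest (fun i => ¬ T i = i) y < i by rw [← hz]; exact hzi) hiy
      tauto
    intro i hi1 hiy
    rcases Nat.eq_zero_or_pos z with h0 | hpos
    · exact hzgood i (by omega) hiy
    · exfalso
      have hTz : ¬ T z = z :=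
        Nat.findGreatest_of_ne_zero (P := fun i => ¬ T i = i) hz.symm (by omega)
      have hzy : z ≤ y := Nat.findGreatest_le y
      have hz2 : 2 ≤ z := by
        rcases Nat.lt_or_ge z 2 with h | h
        · have hz1 : z = 1 := by omega
          rw [hz1] at hTz
          exact absurd hT1 hTz
        · exact h
      have hzney : z ≠ y := fun h => hTz (h ▸ hTy)
      have hTz1 : T (z + 1) = z + 1 := hzgood (z + 1) (by omega) (by omega)
      -- N z = 0, contradicting minimality of x
      have : N z = 0 := by
        rw [hN]
        rw [Finset.card_eq_zero]
        apply Finset.eq_empty_of_forall_notMem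
        intro i hi
        rw [Finset.mem_filter, Finset.mem_Icc] at hi
        obtain ⟨⟨hi1, hiK⟩, hTi⟩ := hi
        rcases hcases z i hi1 hiK hTi with h | h
        · exact hTz (h ▸ hTi)
        · rw [h] at hTi; omega
      exact hxmin z (by omega) (by omega) this
  -- T (y+1) = y
  have hTy1 : T (y + 1) = y := by
    have := habove (y + 1) le_rfl (by omega)
    omega
  -- N y = 2
  have hNy : N y = 2 := by
    rw [hN]
    have : (Finset.Icc 1 K).filter (fun i => T i = y) = {y, y + 1} := by
      ext i
      rw [Finset.mem_filter, Finset.mem_Icc, Finset.mem_insert, Finset.mem_singleton]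
      constructor
      · rintro ⟨⟨hi1, hiK⟩, hTi⟩
        exact hcases y i hi1 hiK hTi
      · rintro (rfl | rfl)
        · exact ⟨⟨hy1, by omega⟩, hTy⟩
        · exact ⟨⟨by omega, by omega⟩, hTy1⟩
    rw [this]
    rw [Finset.card_insert_of_notMem (by simp), Finset.card_singleton]
  -- N j = 1 for other j in [1, x-1]
  have hNj : ∀ j, 1 ≤ j → j ≤ x - 1 → j ≠ y → N j = 1 := by
    intro j hj1 hjx hjy
    rw [hN]
    rcases Nat.lt_or_ge j y with hlt | hgt
    · -- j < y: filter = {j}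
      have : (Finset.Icc 1 K).filter (fun i => T i = j) = {j} := by
        ext i
        rw [Finset.mem_filter, Finset.mem_Icc, Finset.mem_singleton]
        constructor
        · rintro ⟨⟨hi1, hiK⟩, hTi⟩
          rcases hcases j i hi1 hiK hTi with h | h
          · exact h
          · exfalso
            have := hbelow (j + 1) (by omega) (by omega)
            rw [h] at hTi; omega
        · rintro rfl
          exact ⟨⟨by omega, by omega⟩, hbelow _ (by omega) (by omega)⟩
      rw [this, Finset.card_singleton]
    · -- j > y: filter = {j+1}
      have hjgt : y < j := by omega
      have : (Finset.Icc 1 K).filter (fun i => T i = j) = {j + 1} := by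
        ext i
        rw [Finset.mem_filter, Finset.mem_Icc, Finset.mem_singleton]
        constructor
        · rintro ⟨⟨hi1, hiK⟩, hTi⟩
          rcases hcases j i hi1 hiK hTi with h | h
          · exfalso
            have := habove j (by omega) (by omega)
            rw [h] at hTi; omega
          · exact h
        · rintro rfl
          refine ⟨⟨by omega, by omega⟩, ?_⟩
          have := habove (j + 1) (by omega) (by omega)
          omega
      rw [this, Finset.card_singleton]
  -- the sum
  have hsum : ∑ j ∈ Finset.Icc 1 (x - 1), N j = x := by
    have hymem : y ∈ Finset.Icc 1 (x - 1) := Finset.mem_Icc.mpr ⟨hy1, hylt⟩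
    rw [← Finset.sum_erase_add _ _ hymem, hNy]
    have : ∑ j ∈ (Finset.Icc 1 (x - 1)).erase y, N j =
        ∑ j ∈ (Finset.Icc 1 (x - 1)).erase y, 1 := by
      apply Finset.sum_congr rfl
      intro j hj
      rw [Finset.mem_erase, Finset.mem_Icc] at hj
      exact hNj j hj.2.1 hj.2.2 hj.1
    rw [this, Finset.sum_const, smul_eq_mul, mul_one,
      Finset.card_erase_of_mem hymem, Nat.card_Icc]
    omega
  exact ⟨hsum, y, hy1, hylt, hNy, hNj, hbelow, habove⟩
end
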